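/- arXiv:1903.05534 — 2 statements merged into one kernel-verified Lean document; each statement's English description precedes it below -/
import Mathlib

section
/- For a symmetric friend-oriented hedonic game, each player in S_w (players outside P_w with exactly one friend outside P_w) has no friend in P_w. -/
open Finset

section HedonicDefs

variable {α : Type*} [DecidableEq α] [Fintype α]

/-- Additive utility of player `i` in coalition `S`. -/
def util (w : α → α → ℤ) (S : Finset α) (i : α) : ℤ := ∑ j ∈ S, w i j

/-- `π` is a partition of the player set `V`: every player of `V` lies in its own
coalition, coalitions are contained in `V`, and membership determines the coalition. -/
def IsPartition (V : Finset α) (π : α → Finset α) : Prop :=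
  (∀ i ∈ V, i ∈ π i ∧ π i ⊆ V) ∧ ∀ i ∈ V, ∀ j ∈ π i, π j = π i

/-- `S` is a coalition of the partition `π` on `V`, or the empty coalition. -/
def IsCoalitionOf (V : Finset α) (π : α → Finset α) (S : Finset α) : Prop :=
  S = ∅ ∨ ∃ j ∈ V, S = π j

/-- Player `i` has an NS-deviation from `π i` to `S`. -/
def NSDev (w : α → α → ℤ) (V : Finset α) (π : α → Finset α) (i : α) (S : Finset α) : Prop :=
  IsCoalitionOf V π S ∧ S ≠ π i ∧ i ∉ S ∧ util w (π i) i < util w (insert i S) i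

/-- Player `i` has an IS-deviation from `π i` to `S`: an NS-deviation accepted by
all members of the target coalition `S`. -/
def ISDev (w : α → α → ℤ) (V : Finset α) (π : α → Finset α) (i : α) (S : Finset α) : Prop :=
  NSDev w V π i S ∧ ∀ j ∈ S, util w S j ≤ util w (insert i S) j

/-- Player `i` has a CIS-deviation from `π i` to `S`: an IS-deviation also accepted by
all members of the abandoned coalition. -/
def CISDev (w : α → α → ℤ) (V : Finset α) (π : α → Finset α) (i : α) (S : Finset α) : Prop :=
  ISDev w V π i S ∧ ∀ j ∈ (π i).erase i, util w (π i) j ≤ util w ((π i).erase i) j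

def NashStable (w : α → α → ℤ) (V : Finset α) (π : α → Finset α) : Prop :=
  ∀ i ∈ V, ∀ S : Finset α, ¬ NSDev w V π i S

def IndStable (w : α → α → ℤ) (V : Finset α) (π : α → Finset α) : Prop :=
  ∀ i ∈ V, ∀ S : Finset α, ¬ ISDev w V π i S

def CIStable (w : α → α → ℤ) (V : Finset α) (π : α → Finset α) : Prop :=
  ∀ i ∈ V, ∀ S : Finset α, ¬ CISDev w V π i S

/-- Individual rationality: each player weakly prefers its coalition to being alone
(being alone gives utility `w i i = 0`). -/
def IndRational (w : α → α → ℤ) (V : Finset α) (π : α → Finset α) : Prop :=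
  ∀ i ∈ V, 0 ≤ util w (π i) i

/-- Core stability: no nonempty coalition strongly blocks `π`. -/
def CoreStable (w : α → α → ℤ) (V : Finset α) (π : α → Finset α) : Prop :=
  ¬ ∃ S : Finset α, S ⊆ V ∧ S.Nonempty ∧ ∀ i ∈ S, util w (π i) i < util w S i

/-- `π` is robust for the stability notion `St` under deletion of at most `k` players:
`π` satisfies `St` and so does its truncation after removing any `X` with `|X| ≤ k`. -/
def Robust (St : Finset α → (α → Finset α) → Prop) (V : Finset α)
    (π : α → Finset α) (k : ℕ) : Prop :=
  St V π ∧ ∀ X ⊆ V, X.card ≤ k → St (V \ X) (fun i => π i \ X)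

/-- Symmetric friend-oriented game: symmetric weights, zero on the diagonal, and each
off-diagonal weight equals `n` (friends) or `-1` (enemies), where `n` is the number of players. -/
def FriendOriented (w : α → α → ℤ) : Prop :=
  (∀ i j : α, w i j = w j i) ∧ (∀ i : α, w i i = 0) ∧
    ∀ i j : α, i ≠ j → w i j = (Fintype.card α : ℤ) ∨ w i j = -1

/-- `j` is a friend of `i`. -/
def Friend (w : α → α → ℤ) (i j : α) : Prop := i ≠ j ∧ 0 < w i j


instance (w : α → α → ℤ) (i j : α) : Decidable (Friend w i j) :=
  inferInstanceAs (Decidable (_ ∧ _))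

/-- `S` is a clique of the friendship graph. -/
def IsClique (w : α → α → ℤ) (S : Finset α) : Prop :=
  ∀ i ∈ S, ∀ j ∈ S, i ≠ j → Friend w i j

/-- Two players lie in the same connected component of the friendship graph. -/
def SameComp (w : α → α → ℤ) : α → α → Prop :=
  Relation.ReflTransGen (fun a b => Friend w a b)

/-- The connected component of `v` in the friendship graph, as a set. -/
def comp (w : α → α → ℤ) (v : α) : Set α := {u | SameComp w v u}

end HedonicDefs
section ElimDefs

variable {α : Type*} [DecidableEq α] [Fintype α]

/-- Friendship within the subgame on vertex set `V`. -/
def FriendIn (w : α → α → ℤ) (V : Set α) (i j : α) : Prop :=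
  i ∈ V ∧ j ∈ V ∧ Friend w i j

/-- `j` is the unique friend of `i` in the subgraph induced by `V`. -/
def UniqueFriendIn (w : α → α → ℤ) (V : Set α) (i j : α) : Prop :=
  FriendIn w V i j ∧ ∀ l : α, FriendIn w V i l → l = j

/-- `v` is a leaf (degree-one vertex) of the subgraph induced by `V`. -/
def LeafIn (w : α → α → ℤ) (V : Set α) (v : α) : Prop :=
  v ∈ V ∧ ∃! u : α, FriendIn w V v u

/-- `j` is a pseudo-center of the subgraph induced by `V`:
at most one neighbor of `j` is a non-leaf. -/
def PseudoCenterIn (w : α → α → ℤ) (V : Set α) (j : α) : Prop :=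
  ∀ u u' : α, FriendIn w V j u → ¬ LeafIn w V u →
    FriendIn w V j u' → ¬ LeafIn w V u' → u = u'

/-- Players removed by a list of pairs. -/
def removed (L : List (α × α)) : Set α := {v | ∃ p ∈ L, v = p.1 ∨ v = p.2}

/-- `L` is an outer elimination sequence: at each step `t`, in the graph `G_t` obtained
by deleting all earlier pairs, `j_t` is the unique friend of `i_t` and, moreover,
(E1) `j_t` is a pseudo-center of `G_t`, or (E2) `i_t` is a friend of an earlier-removed player. -/
def IsElimSeq (w : α → α → ℤ) (L : List (α × α)) : Prop :=
  ∀ (t : ℕ) (h : t < L.length),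
    UniqueFriendIn w {v | v ∉ removed (L.take t)} (L.get ⟨t, h⟩).1 (L.get ⟨t, h⟩).2 ∧
      (PseudoCenterIn w {v | v ∉ removed (L.take t)} (L.get ⟨t, h⟩).2 ∨
        ∃ q ∈ removed (L.take t), Friend w (L.get ⟨t, h⟩).1 q)

/-- `{i, j}` is an elimination pair: it appears in some outer elimination sequence. -/
def ElimPair (w : α → α → ℤ) (i j : α) : Prop :=
  ∃ L : List (α × α), IsElimSeq w L ∧ (i, j) ∈ L

/-- `P_w`: the players belonging to some elimination pair. -/
def Pset (w : α → α → ℤ) : Set α :=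
  {v | ∃ i j : α, ElimPair w i j ∧ (v = i ∨ v = j)}

/-- `S_w`: players outside `P_w` with exactly one friend outside `P_w`. -/
def Sset (w : α → α → ℤ) : Set α :=
  {v | v ∉ Pset w ∧ ∃! u : α, u ∉ Pset w ∧ Friend w v u}

/-- `B_w`: players with at least two friends outside `P_w ∪ S_w`. -/
def Bset (w : α → α → ℤ) : Set α :=
  {v | ∃ u u' : α, u ≠ u' ∧ u ∉ Pset w ∪ Sset w ∧ u' ∉ Pset w ∪ Sset w ∧
    Friend w v u ∧ Friend w v u'}

/-- `R_w`: the remaining players. -/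
def Rset (w : α → α → ℤ) : Set α := {v | v ∉ Pset w ∪ Sset w ∪ Bset w}

end ElimDefs

/-! Elimination sequences can be merged. Replay a sequence `M` on top of a sequence `N`: a pair
`(x, y)` of `M` whose second player is already isolated is skipped (then `x` is isolated too),
and otherwise it can be appended, since `x` cannot have been eliminated by `N` (a descent
argument comparing the steps at which players are eliminated in the two sequences). Merging
the finitely many sequences that witness `P_w` gives one sequence `N` after which all of `P_w` is
isolated. A player `v ∈ S_w` with a friend in `P_w` then survives `N` with its friend `s ∉ P_w`
as unique friend and an eliminated friend, so `(v, s)` can be appended by (E2): `v ∈ P_w`. -/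

section Elimination

variable {α : Type*} {w : α → α → ℤ}

theorem Friend.symm (hw : ∀ i j, w i j = w j i) {i j : α} (h : Friend w i j) : Friend w j i :=
  ⟨h.1.symm, hw j i ▸ h.2⟩

theorem FriendIn.symm (hw : ∀ i j, w i j = w j i) {V : Set α} {i j : α}
    (h : FriendIn w V i j) : FriendIn w V j i :=
  ⟨h.2.1, h.1, h.2.2.symm hw⟩

@[simp]
theorem removed_nil : removed ([] : List (α × α)) = ∅ := by
  ext; simp [removed]

@[simp]
theorem mem_removed_append {L M : List (α × α)} {z : α} :
    z ∈ removed (L ++ M) ↔ z ∈ removed L ∨ z ∈ removed M := by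
  simp only [removed, Set.mem_ofPred_eq, List.mem_append]
  grind

@[simp]
theorem mem_removed_cons {L : List (α × α)} {p : α × α} {z : α} :
    z ∈ removed (p :: L) ↔ z = p.1 ∨ z = p.2 ∨ z ∈ removed L := by
  simp only [removed, Set.mem_ofPred_eq, List.mem_cons]
  grind

def ElimStep (w : α → α → ℤ) (L : List (α × α)) (p : α × α) : Prop :=
  UniqueFriendIn w {v | v ∉ removed L} p.1 p.2 ∧
    (PseudoCenterIn w {v | v ∉ removed L} p.2 ∨ ∃ q ∈ removed L, Friend w p.1 q)

theorem isElimSeq_nil : IsElimSeq w [] := by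
  simp [IsElimSeq]

theorem IsElimSeq.of_prefix {L M : List (α × α)} (h : IsElimSeq w M) (hLM : L <+: M) :
    IsElimSeq w L := by
  obtain ⟨M, rfl⟩ := hLM
  intro t ht
  have := h t (by simp; omega)
  simpa [List.take_append_of_le_length ht.le, List.getElem_append_left ht] using this

theorem IsElimSeq.elimStep {L M : List (α × α)} {p : α × α} (h : IsElimSeq w (L ++ p :: M)) :
    ElimStep w L p := by
  have := h L.length (by simp)
  simpa [ElimStep] using this

theorem IsElimSeq.append_singleton {L : List (α × α)} {p : α × α} (hL : IsElimSeq w L)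
    (hp : ElimStep w L p) : IsElimSeq w (L ++ [p]) := by
  intro t ht
  rcases (show t < L.length ∨ t = L.length by simp at ht; omega) with ht | rfl
  · simpa [List.take_append_of_le_length ht.le, List.getElem_append_left ht] using hL t ht
  · simpa [ElimStep] using hp

theorem removed_subset_pset {L : List (α × α)} (hL : IsElimSeq w L) : removed L ⊆ Pset w := by
  rintro z ⟨p, hp, hz⟩
  exact ⟨p.1, p.2, ⟨L, hL, hp⟩, hz⟩

-- Descent on `|S| + |T|`: were `p` eliminated within `S`, it would be as the unique friend of
-- some `a` that `T` has already eliminated, and `a`, `p` then take the roles of `p`, `z` with the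
-- two sequences swapped.
theorem IsElimSeq.partner_notMem_removed (hw : ∀ i j, w i j = w j i)
    {S T : List (α × α)} {z y p : α} (hS : IsElimSeq w (S ++ [(z, y)]))
    (hT : IsElimSeq w (T ++ [(p, z)])) : p ∉ removed S := by
  induction h : S.length + T.length using Nat.strong_induction_on generalizing S T z y p with
  | _ n ih =>
  rintro ⟨⟨a, b⟩, hab, hp⟩
  obtain ⟨S₁, S₂, rfl⟩ := List.append_of_mem hab
  have hSab : IsElimSeq w (S₁ ++ [(a, b)]) := hS.of_prefix ⟨S₂ ++ [(z, y)], by simp⟩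
  have hz : z ∉ removed (S₁ ++ (a, b) :: S₂) := hS.elimStep.1.1.1
  simp only [mem_removed_append, mem_removed_cons, not_or] at hz
  have hab : UniqueFriendIn w {v | v ∉ removed S₁} a b := hSab.elimStep.1
  have hpz : UniqueFriendIn w {v | v ∉ removed T} p z := hT.elimStep.1
  rcases hp with rfl | rfl
  · exact hz.2.2.1 (hab.2 z ⟨hab.1.1, hz.1, hpz.1.2.2⟩)
  · have ha : a ∈ removed T := by
      by_contra ha
      exact hz.2.1 (hpz.2 a ⟨hpz.1.1, ha, hab.1.2.2.symm hw⟩).symm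
    exact ih _ (by simp at h; omega) hT hSab rfl ha

-- Eliminated players count as isolated.
def isolatedAfter (w : α → α → ℤ) (L : List (α × α)) : Set α :=
  {z | ∀ u, ¬ FriendIn w {v | v ∉ removed L} z u}

theorem removed_subset_isolatedAfter (L : List (α × α)) : removed L ⊆ isolatedAfter w L :=
  fun _ hz _ hu => hu.1 hz

theorem isolatedAfter_mono {L M : List (α × α)} (h : removed L ⊆ removed M) :
    isolatedAfter w L ⊆ isolatedAfter w M :=
  fun _ hz u hu => hz u ⟨fun h' => hu.1 (h h'), fun h' => hu.2.1 (h h'), hu.2.2⟩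

theorem IsElimSeq.fst_notMem_removed (hw : ∀ i j, w i j = w j i) {M N : List (α × α)}
    {x y : α} (hM : IsElimSeq w (M ++ [(x, y)])) (hN : IsElimSeq w N) (hy : y ∉ removed N) :
    x ∉ removed N := by
  rintro ⟨⟨a, b⟩, hab, hx⟩
  obtain ⟨N₁, N₂, rfl⟩ := List.append_of_mem hab
  have hNab : IsElimSeq w (N₁ ++ [(a, b)]) := hN.of_prefix ⟨N₂, by simp⟩
  have hab : UniqueFriendIn w {v | v ∉ removed N₁} a b := hNab.elimStep.1
  have hxy : UniqueFriendIn w {v | v ∉ removed M} x y := hM.elimStep.1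
  simp only [mem_removed_append, mem_removed_cons, not_or] at hy
  rcases hx with rfl | rfl
  · exact hy.2.2.1 (hab.2 y ⟨hab.1.1, hy.1, hxy.1.2.2⟩)
  · have ha : a ∈ removed M := by
      by_contra ha
      exact hy.2.1 (hxy.2 a ⟨hxy.1.1, ha, hab.1.2.2.symm hw⟩).symm
    exact hM.partner_notMem_removed hw hNab ha

section Transfer

variable (hw : ∀ i j, w i j = w j i) {M N : List (α × α)}
  (hMN : removed M ⊆ isolatedAfter w N)
include hw hMN

theorem FriendIn.of_removed_subset_isolatedAfter {a b : α}
    (h : FriendIn w {v | v ∉ removed N} a b) : FriendIn w {v | v ∉ removed M} a b :=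
  ⟨fun ha => hMN ha b h, fun hb => hMN hb a (h.symm hw), h.2.2⟩

theorem LeafIn.of_removed_subset_isolatedAfter {u y : α}
    (hu : LeafIn w {v | v ∉ removed M} u) (huy : FriendIn w {v | v ∉ removed N} u y) :
    LeafIn w {v | v ∉ removed N} u := by
  obtain ⟨-, f, -, hf⟩ := hu
  refine ⟨huy.1, y, huy, fun g hg => ?_⟩
  rw [hf g (hg.of_removed_subset_isolatedAfter hw hMN),
    hf y (huy.of_removed_subset_isolatedAfter hw hMN)]

theorem ElimStep.of_removed_subset_isolatedAfter {x y : α} (h : ElimStep w M (x, y))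
    (hx : x ∉ removed N) (hy : y ∉ removed N) : ElimStep w N (x, y) := by
  obtain ⟨⟨hxy, huniq⟩, hE⟩ := h
  refine ⟨⟨⟨hx, hy, hxy.2.2⟩,
    fun l hl => huniq l (hl.of_removed_subset_isolatedAfter hw hMN)⟩, ?_⟩
  rcases hE with hE | ⟨q, hq, hxq⟩
  · refine Or.inl fun u u' hu hu_leaf hu' hu'_leaf => hE u u' ?_ ?_ ?_ ?_
    · exact hu.of_removed_subset_isolatedAfter hw hMN
    · exact fun h => hu_leaf (h.of_removed_subset_isolatedAfter hw hMN (hu.symm hw))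
    · exact hu'.of_removed_subset_isolatedAfter hw hMN
    · exact fun h => hu'_leaf (h.of_removed_subset_isolatedAfter hw hMN (hu'.symm hw))
  · refine Or.inr ⟨q, ?_, hxq⟩
    by_contra hqN
    exact hMN hq x ⟨hqN, hx, hxq.symm hw⟩

end Transfer

theorem IsElimSeq.exists_merge (hw : ∀ i j, w i j = w j i) {M N : List (α × α)}
    (hM : IsElimSeq w M) (hN : IsElimSeq w N) :
    ∃ N', IsElimSeq w N' ∧ removed N ⊆ removed N' ∧ removed M ⊆ isolatedAfter w N' := by
  induction M using List.reverseRecOn with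
  | nil => exact ⟨N, hN, subset_rfl, by simp⟩
  | append_singleton M p ih =>
    obtain ⟨x, y⟩ := p
    obtain ⟨N', hN', hNN', hMN'⟩ := ih (hM.of_prefix (List.prefix_append _ _))
    have hxy : ElimStep w M (x, y) := hM.elimStep
    by_cases hy : y ∈ isolatedAfter w N'
    · have hx : x ∈ isolatedAfter w N' := by
        intro u hu
        by_cases huM : u ∈ removed M
        · exact hMN' huM x (hu.symm hw)
        · obtain rfl := hxy.1.2 u ⟨hxy.1.1.1, huM, hu.2.2⟩
          exact hy x (hu.symm hw)
      refine ⟨N', hN', hNN', fun z hz => ?_⟩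
      simp only [mem_removed_append, mem_removed_cons, removed_nil, Set.mem_empty_iff_false,
        or_false] at hz
      rcases hz with hz | rfl | rfl
      exacts [hMN' hz, hx, hy]
    · have hyN' : y ∉ removed N' := fun h => hy (removed_subset_isolatedAfter _ h)
      have hxN' : x ∉ removed N' := hM.fst_notMem_removed hw hN' hyN'
      have hN'N'' : removed N' ⊆ removed (N' ++ [(x, y)]) := fun z hz => by simp [hz]
      refine ⟨N' ++ [(x, y)],
        hN'.append_singleton (hxy.of_removed_subset_isolatedAfter hw hMN' hxN' hyN'),
        hNN'.trans hN'N'', fun z hz => ?_⟩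
      simp only [mem_removed_append, mem_removed_cons, removed_nil, Set.mem_empty_iff_false,
        or_false] at hz
      rcases hz with hz | hz
      · exact isolatedAfter_mono hN'N'' (hMN' hz)
      · exact removed_subset_isolatedAfter _ (by simpa using Or.inr hz)

theorem exists_isElimSeq_pset_subset_isolatedAfter [Finite α] (hw : ∀ i j, w i j = w j i) :
    ∃ N, IsElimSeq w N ∧ Pset w ⊆ isolatedAfter w N := by
  refine Set.Finite.induction_on_subset
    (motive := fun s _ => ∃ N, IsElimSeq w N ∧ s ⊆ isolatedAfter w N)
    _ (Set.toFinite (Pset w)) ⟨[], isElimSeq_nil, by simp⟩ ?_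
  rintro z s ⟨a, b, ⟨L, hL, hab⟩, hz⟩ - - ⟨N, hN, hs⟩
  obtain ⟨N', hN', hNN', hLN'⟩ := hL.exists_merge hw hN
  exact ⟨N', hN', Set.insert_subset (hLN' ⟨_, hab, hz⟩)
    (hs.trans (isolatedAfter_mono hNN'))⟩

end Elimination

theorem s_players_no_friend_in_p_general {α : Type*} [Fintype α]
    (w : α → α → ℤ) (hw : FriendOriented w) :
    ∀ v ∈ Sset w, ∀ u ∈ Pset w, ¬ Friend w v u := by
  rintro v ⟨hvP, s, ⟨hsP, hvs⟩, hs⟩ u hu hvu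
  obtain ⟨N, hN, hPN⟩ := exists_isElimSeq_pset_subset_isolatedAfter hw.1
  have hvN : v ∉ removed N := fun h => hvP (removed_subset_pset hN h)
  have hsN : s ∉ removed N := fun h => hsP (removed_subset_pset hN h)
  have hfriend : ∀ f ∈ Pset w, Friend w v f → f ∈ removed N := fun f hf hvf => by
    by_contra hfN
    exact hPN hf v ⟨hfN, hvN, hvf.symm hw.1⟩
  have hstep : ElimStep w N (v, s) :=
    ⟨⟨⟨hvN, hsN, hvs⟩,
      fun l hl => hs l ⟨fun hlP => hl.2.1 (hfriend l hlP hl.2.2), hl.2.2⟩⟩,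
      Or.inr ⟨u, hfriend u hu hvu, hvu⟩⟩
  exact hvP ⟨v, s, ⟨_, hN.append_singleton hstep, by simp⟩, Or.inl rfl⟩

/-- In a symmetric friend-oriented game, each player of `S_w` has no
friend in `P_w`. -/
theorem s_players_no_friend_in_p {α : Type*} [DecidableEq α] [Fintype α]
    (w : α → α → ℤ) (hw : FriendOriented w) :
    ∀ v ∈ Sset w, ∀ u ∈ Pset w, ¬ Friend w v u :=
  s_players_no_friend_in_p_general w hw
end

section
/- For a symmetric friend-oriented hedonic game with k = 1 and any CIS-robust partition π, if ({i_t, j_t})_{t=1..t*} is an outer elimination sequence, then π(i_t) = {i_t, j_t} for every t = 1, ..., t*. -/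
open Finset

section AuxProof

variable {α : Type*} [DecidableEq α] [Fintype α]

lemma friend_symm {w : α → α → ℤ} (hw : FriendOriented w) {i j : α}
    (h : Friend w i j) : Friend w j i := by
  refine ⟨h.1.symm, ?_⟩
  rw [← hw.1 i j]; exact h.2

lemma enemy_val {w : α → α → ℤ} (hw : FriendOriented w) {i j : α} (hne : i ≠ j)
    (hnf : ¬ Friend w i j) : w i j = -1 := by
  rcases hw.2.2 i j hne with h | h
  · exfalso
    have : Nonempty α := ⟨i⟩
    exact hnf ⟨hne, by rw [h]; exact_mod_cast Fintype.card_pos (α := α)⟩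
  · exact h

lemma util_singleton (w : α → α → ℤ) (a b : α) : util w {a} b = w b a := by
  simp [util]

/-- If `x` has no friends in its coalition and the coalition has another member,
CIS-stability is violated (by `x` deviating to the empty coalition). -/
lemma no_lonely {w : α → α → ℤ} (hw : FriendOriented w) {V : Finset α}
    {π : α → Finset α} (hst : CIStable w V π) {x : α} (hxV : x ∈ V)
    (hx : x ∈ π x) (hcard : 2 ≤ (π x).card)
    (hnf : ∀ m ∈ π x, ¬ Friend w x m) : False := by
  have hen : ∀ m ∈ (π x).erase x, w x m = -1 := by
    intro m hm
    have hmx : m ≠ x := (Finset.mem_erase.mp hm).1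
    exact enemy_val hw (Ne.symm hmx) (hnf m (Finset.mem_erase.mp hm).2)
  have hux : util w (π x) x = -(((π x).card : ℤ) - 1) := by
    unfold util
    rw [← Finset.add_sum_erase _ _ hx, hw.2.1 x]
    rw [Finset.sum_congr rfl hen, Finset.sum_const, Finset.card_erase_of_mem hx]
    have h1 : 1 ≤ (π x).card := Finset.card_pos.mpr ⟨x, hx⟩
    rw [nsmul_eq_mul, Nat.cast_sub h1]
    push_cast
    ring
  apply hst x hxV ∅
  refine ⟨⟨⟨Or.inl rfl, ?_, ?_, ?_⟩, ?_⟩, ?_⟩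
  · intro hempty
    have := hx; rw [← hempty] at this; simp at this
  · simp
  · rw [hux]
    have : util w (insert x ∅) x = 0 := by
      simp [util, hw.2.1 x]
    rw [this]
    have : (2 : ℤ) ≤ ((π x).card : ℤ) := by exact_mod_cast hcard
    linarith
  · intro m hm; simp at hm
  · intro m hm
    have hmem : x ∈ π x := hx
    have : util w (π x) m = w m x + util w ((π x).erase x) m := by
      unfold util
      rw [← Finset.add_sum_erase _ _ hmem]
    rw [this]
    have hmx : m ≠ x := (Finset.mem_erase.mp hm).1
    have : w m x = -1 := by
      apply enemy_val hw hmx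
      intro hf
      exact hnf m (Finset.mem_erase.mp hm).2 (friend_symm hw hf)
    rw [this]; linarith

/-- If two mutual friends are both in singleton coalitions,
CIS-stability is violated. -/
lemma join_pair {w : α → α → ℤ} (hw : FriendOriented w) {V : Finset α}
    {π : α → Finset α} (hst : CIStable w V π) {i j : α} (hiV : i ∈ V)
    (hjV : j ∈ V) (hfr : Friend w i j) (hπi : π i = {i}) (hπj : π j = {j}) :
    False := by
  have hij : i ≠ j := hfr.1
  have hpos : 0 < w i j := hfr.2
  apply hst i hiV {j}
  refine ⟨⟨⟨Or.inr ⟨j, hjV, hπj.symm⟩, ?_, ?_, ?_⟩, ?_⟩, ?_⟩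
  · rw [hπi]
    intro hh
    exact hij (Finset.singleton_injective hh).symm
  · simp [hij]
  · rw [hπi, util_singleton, hw.2.1 i]
    have : util w (insert i {j}) i = w i j := by
      unfold util
      rw [Finset.sum_insert (by simp [hij])]
      simp [hw.2.1 i]
    rw [this]; exact hpos
  · intro m hm
    simp only [Finset.mem_singleton] at hm
    subst hm
    rw [util_singleton, hw.2.1 m]
    have : util w (insert i {m}) m = w m i := by
      unfold util
      rw [Finset.sum_insert (by simp [hij])]
      simp [hw.2.1 m]
    rw [this, ← hw.1 i m]
    linarith
  · intro m hm
    rw [hπi] at hm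
    simp at hm

end AuxProof

/-- For `k = 1` and a CIS-robust partition `π`, every pair of an outer
elimination sequence forms a coalition of `π`. -/
theorem elim_pairs_form_coalitions {α : Type*} [DecidableEq α] [Fintype α]
    (w : α → α → ℤ) (hw : FriendOriented w)
    (π : α → Finset α) (hπ : IsPartition (Finset.univ : Finset α) π)
    (hrob : Robust (CIStable w) Finset.univ π 1)
    (L : List (α × α)) (hL : IsElimSeq w L) :
    ∀ (t : ℕ) (h : t < L.length),
      π (L.get ⟨t, h⟩).1 = {(L.get ⟨t, h⟩).1, (L.get ⟨t, h⟩).2} := by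
  have hmem : ∀ v : α, v ∈ π v := fun v => (hπ.1 v (Finset.mem_univ v)).1
  have hcoal : ∀ v m : α, m ∈ π v → π m = π v :=
    fun v m hm => hπ.2 v (Finset.mem_univ v) m hm
  intro t
  induction t using Nat.strong_induction_on with
  | _ t IH =>
  intro h
  obtain ⟨huf, hE⟩ := hL t h
  unfold UniqueFriendIn FriendIn at huf
  obtain ⟨⟨hiV, hjV, hfr⟩, huniq⟩ := huf
  set i := (L.get ⟨t, h⟩).1 with hi_def
  set j := (L.get ⟨t, h⟩).2 with hj_def
  simp only [Set.mem_setOf_eq] at hiV hjV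
  have htake : ∀ p ∈ L.take t, ∃ (s : ℕ) (hs : s < L.length), s < t ∧ L.get ⟨s, hs⟩ = p := by
    intro p hp
    obtain ⟨k, hk, hpk⟩ := List.getElem_of_mem hp
    have hklen : k < L.length := lt_of_lt_of_le hk (by simp [List.length_take])
    have hkt : k < t := lt_of_lt_of_le hk (by simp [List.length_take])
    exact ⟨k, hklen, hkt, by rw [← hpk]; simp [List.getElem_take]⟩
  have hpair : ∀ p ∈ L.take t, π p.1 = {p.1, p.2} ∧ π p.2 = {p.1, p.2} := by
    intro p hp
    obtain ⟨s, hs, hst', hps⟩ := htake p hp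
    have h1 : π p.1 = {p.1, p.2} := by have := IH s hst' hs; rwa [hps] at this
    refine ⟨h1, ?_⟩
    have h2 : p.2 ∈ π p.1 := by rw [h1]; simp
    rw [hcoal p.1 p.2 h2, h1]
  have hclean : ∀ v : α, v ∉ removed (L.take t) → ∀ m ∈ π v, m ∉ removed (L.take t) := by
    intro v hv m hm hmr
    obtain ⟨p, hp, hm12⟩ := (hmr : ∃ p ∈ L.take t, m = p.1 ∨ m = p.2)
    obtain ⟨h1, h2⟩ := hpair p hp
    have hπm : π m = {p.1, p.2} := by rcases hm12 with rfl | rfl; exacts [h1, h2]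
    have hπv : π v = {p.1, p.2} := by rw [← hcoal v m hm, hπm]
    have hv2 : v ∈ ({p.1, p.2} : Finset α) := hπv ▸ hmem v
    simp only [Finset.mem_insert, Finset.mem_singleton] at hv2
    exact hv (⟨p, hp, hv2⟩ : ∃ p ∈ L.take t, v = p.1 ∨ v = p.2)
  have hFB : ∀ m ∈ π i, Friend w i m → m = j := by
    intro m hm hf
    exact huniq m ⟨hiV, hclean i hiV m hm, hf⟩
  have hij : i ≠ j := hfr.1
  -- Step R1 : j ∈ π i
  have hji : j ∈ π i := by
    by_contra hj
    have hπi : π i = {i} := by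
      rw [Finset.eq_singleton_iff_unique_mem]
      refine ⟨hmem i, ?_⟩
      intro b hb
      by_contra hbne
      refine no_lonely hw hrob.1 (Finset.mem_univ i) (hmem i) ?_ ?_
      · exact Finset.one_lt_card.mpr ⟨i, hmem i, b, hb, fun e => hbne e.symm⟩
      · intro m hm hf
        exact hj (hFB m hm hf ▸ hm)
    rcases hE with hpc | ⟨q, hq, hfq⟩
    · -- case (E1) : j is a pseudo-center
      unfold PseudoCenterIn at hpc
      have hπj_ne : π j ≠ {j} := fun hh =>
        join_pair hw hrob.1 (Finset.mem_univ i) (Finset.mem_univ j) hfr hπi hh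
      obtain ⟨b, hb, hbj⟩ : ∃ b ∈ π j, b ≠ j := by
        by_contra hc
        push_neg at hc
        exact hπj_ne (Finset.eq_singleton_iff_unique_mem.mpr ⟨hmem j, hc⟩)
      have hcardj : 2 ≤ (π j).card :=
        Finset.one_lt_card.mpr ⟨b, hb, j, hmem j, hbj⟩
      obtain ⟨u, hu, hfu⟩ : ∃ u ∈ π j, Friend w j u := by
        by_contra hc
        push_neg at hc
        exact no_lonely hw hrob.1 (Finset.mem_univ j) (hmem j) hcardj hc
      have hju : j ≠ u := hfu.1
      have hui : u ≠ i := by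
        intro e
        have h2 : j ∈ π u := (hcoal j u hu) ▸ hmem j
        rw [e, hπi] at h2
        exact hij (Finset.mem_singleton.mp h2).symm
      by_cases hun : ∀ m ∈ π j, Friend w j m → m = u
      · -- u is the unique friend of j inside π j : delete u
        have hrob' := hrob.2 {u} (Finset.subset_univ _) (by simp)
        by_cases hjsing : π j \ {u} = ({j} : Finset α)
        · refine join_pair hw hrob' (i := i) (j := j) ?_ ?_ hfr ?_ hjsing
          · simp [hui.symm]
          · simp [hju]
          · show π i \ {u} = {i}
            rw [hπi, Finset.sdiff_singleton_eq_erase,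
              Finset.erase_eq_self.mpr (by simp [hui])]
        · have hjmem : j ∈ π j \ {u} := Finset.mem_sdiff.mpr ⟨hmem j, by simp [hju]⟩
          obtain ⟨b', hb', hb'j⟩ : ∃ b' ∈ π j \ {u}, b' ≠ j := by
            by_contra hc
            push_neg at hc
            exact hjsing (Finset.eq_singleton_iff_unique_mem.mpr ⟨hjmem, hc⟩)
          refine no_lonely hw hrob' (x := j) ?_ hjmem ?_ ?_
          · simp [hju]
          · exact Finset.one_lt_card.mpr ⟨b', hb', j, hjmem, hb'j⟩
          · intro m hm hf
            obtain ⟨hm1, hm2⟩ := Finset.mem_sdiff.mp hm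
            simp only [Finset.mem_singleton] at hm2
            exact hm2 (hun m hm1 hf)
      · -- j has two friends inside π j : one of them is a leaf; delete j
        push_neg at hun
        obtain ⟨u', hu', hfu', hu'u⟩ := hun
        have huV : u ∉ removed (L.take t) := hclean j hjV u hu
        have hu'V : u' ∉ removed (L.take t) := hclean j hjV u' hu'
        have hleaf : LeafIn w {v | v ∉ removed (L.take t)} u ∨
            LeafIn w {v | v ∉ removed (L.take t)} u' := by
          by_contra hc
          push_neg at hc
          exact hu'u (hpc u' u ⟨hjV, hu'V, hfu'⟩ hc.2 ⟨hjV, huV, hfu⟩ hc.1)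
        have key : ∀ a b : α, a ∈ π j → b ∈ π j → Friend w j a → b ≠ j → a ≠ b →
            LeafIn w {v | v ∉ removed (L.take t)} a → False := by
          intro a b ha hb hfa hbj hab hlf
          unfold LeafIn FriendIn at hlf
          obtain ⟨haV, c, hc, hcu⟩ := hlf
          have haj : a ≠ j := fun e => hfa.1 e.symm
          have hall : ∀ y : α, y ∉ removed (L.take t) → Friend w a y → y = j := by
            intro y hyV hfy
            have h1 := hcu y ⟨haV, hyV, hfy⟩
            have h2 := hcu j ⟨haV, hjV, friend_symm hw hfa⟩
            rw [h1, h2]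
          have hrob' := hrob.2 {j} (Finset.subset_univ _) (by simp)
          have hπa : π a = π j := hcoal j a ha
          have hamem : a ∈ π a \ {j} := Finset.mem_sdiff.mpr ⟨hmem a, by simp [haj]⟩
          refine no_lonely hw hrob' (x := a) ?_ hamem ?_ ?_
          · simp [haj]
          · refine Finset.one_lt_card.mpr ⟨a, hamem, b, ?_, hab⟩
            exact Finset.mem_sdiff.mpr ⟨by rw [hπa]; exact hb, by simp [hbj]⟩
          · intro m hm hf
            obtain ⟨hm1, hm2⟩ := Finset.mem_sdiff.mp hm
            have hmj : m ∈ π j := by rw [← hπa]; exact hm1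
            have hmV : m ∉ removed (L.take t) := hclean j hjV m hmj
            simp only [Finset.mem_singleton] at hm2
            exact hm2 (hall m hmV hf)
        rcases hleaf with hl | hl
        · exact key u u' hu hu' hfu (fun e => hfu'.1 e.symm) (fun e => hu'u e.symm) hl
        · exact key u' u hu' hu hfu' (fun e => hfu.1 e.symm) hu'u hl
    · -- case (E2) : i has a previously removed friend q
      obtain ⟨p, hp, hq12⟩ := (hq : ∃ p ∈ L.take t, q = p.1 ∨ q = p.2)
      obtain ⟨s, hs, hst', hps⟩ := htake p hp
      have hne12 : p.1 ≠ p.2 := by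
        have h0 := (hL s hs).1
        unfold UniqueFriendIn FriendIn at h0
        rw [hps] at h0
        exact h0.1.2.2.1
      obtain ⟨h1, h2⟩ := hpair p hp
      have hremoved : ∀ x : α, (x = p.1 ∨ x = p.2) → x ∈ removed (L.take t) :=
        fun x hx => (⟨p, hp, hx⟩ : ∃ p ∈ L.take t, x = p.1 ∨ x = p.2)
      have keyE2 : ∀ q1 q2 : α, q1 ≠ q2 → π q1 = {q1, q2} → Friend w i q1 →
          q1 ∈ removed (L.take t) → q2 ∈ removed (L.take t) → False := by
        intro q1 q2 hq12' hπq1 hfiq hq1r hq2r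
        have hrob' := hrob.2 {q2} (Finset.subset_univ _) (by simp)
        have hiq2 : i ≠ q2 := fun e => hiV (e ▸ hq2r)
        refine join_pair hw hrob' (i := i) (j := q1) ?_ ?_ hfiq ?_ ?_
        · simp [hiq2]
        · simp [hq12']
        · show π i \ {q2} = {i}
          rw [hπi, Finset.sdiff_singleton_eq_erase,
            Finset.erase_eq_self.mpr (by simp [Ne.symm hiq2])]
        · show π q1 \ {q2} = {q1}
          rw [hπq1]
          ext x
          simp only [Finset.mem_sdiff, Finset.mem_insert, Finset.mem_singleton]
          constructor
          · rintro ⟨hx1 | hx1, hx2⟩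
            · exact hx1
            · exact absurd hx1 hx2
          · rintro rfl
            exact ⟨Or.inl rfl, hq12'⟩
      rcases hq12 with rfl | rfl
      · exact keyE2 p.1 p.2 hne12 h1 hfq (hremoved _ (Or.inl rfl)) (hremoved _ (Or.inr rfl))
      · exact keyE2 p.2 p.1 (Ne.symm hne12) (by rw [h2, Finset.pair_comm]) hfq
          (hremoved _ (Or.inr rfl)) (hremoved _ (Or.inl rfl))
  -- Step R2 : π i has no third member
  have hsub : ∀ m ∈ π i, m = i ∨ m = j := by
    intro m hm
    by_contra hc
    push_neg at hc
    have hrob' := hrob.2 {j} (Finset.subset_univ _) (by simp)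
    have himem : i ∈ π i \ {j} := Finset.mem_sdiff.mpr ⟨hmem i, by simp [hij]⟩
    refine no_lonely hw hrob' (x := i) ?_ himem ?_ ?_
    · simp [hij]
    · refine Finset.one_lt_card.mpr ⟨i, himem, m, ?_, fun e => hc.1 e.symm⟩
      exact Finset.mem_sdiff.mpr ⟨hm, by simp [hc.2]⟩
    · intro m' hm' hf
      obtain ⟨hm1, hm2⟩ := Finset.mem_sdiff.mp hm'
      simp only [Finset.mem_singleton] at hm2
      exact hm2 (hFB m' hm1 hf)
  apply Finset.Subset.antisymm
  · intro m hm
    rcases hsub m hm with rfl | rfl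
    · exact Finset.mem_insert_self _ _
    · exact Finset.mem_insert_of_mem (Finset.mem_singleton_self _)
  · intro m hm
    rcases Finset.mem_insert.mp hm with rfl | hm'
    · exact hmem i
    · rw [Finset.mem_singleton.mp hm']
      exact hji
end
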